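/- arXiv:2408.15184 — 2 statements merged into one kernel-verified Lean document; each statement's English description precedes it below -/
import Mathlib

section
/- Let F : Grph ⥤ Grph be a functor and α : 𝟭_Grph ⟶ F a natural transformation all of whose components are epimorphisms. If for some graph G the edge map of α_G : G ⟶ F(G) identifies two distinct edges of G, then F sends the graph with one vertex and two loop edges to a graph isomorphic to the terminal graph (one vertex and one loop edge). -/
open CategoryTheory CategoryTheory.Limits

/-- The category of directed multigraphs, realized as the functor category from the
walking parallel pair (objects `zero` = edges, `one` = vertices; morphisms
`left` = source, `right` = target) to `Type`. -/
abbrev Grph : Type 1 := WalkingParallelPair ⥤ Type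

namespace Grph

/-- The source map of a graph. -/
def src (G : Grph) : G.obj .zero → G.obj .one := G.map .left

/-- The target map of a graph. -/
def tgt (G : Grph) : G.obj .zero → G.obj .one := G.map .right

/-- The connectivity relation on the vertices of a graph: the equivalence relation
generated by relating `u` and `v` whenever some edge has source `u` and target `v`. -/
def connRel (G : Grph) : G.obj .one → G.obj .one → Prop :=
  Relation.EqvGen fun u v => ∃ e, G.src e = u ∧ G.tgt e = v

lemma connRel_map {G H : Grph} (φ : G ⟶ H) {u v : G.obj .one} (h : G.connRel u v) :
    H.connRel (φ.app .one u) (φ.app .one v) := by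
  induction h with
  | rel u v h =>
      obtain ⟨e, he, he'⟩ := h
      refine Relation.EqvGen.rel _ _ ⟨φ.app .zero e, ?_, ?_⟩
      · rw [← he]; exact (ConcreteCategory.congr_hom (φ.naturality WalkingParallelPairHom.left) e).symm
      · rw [← he']; exact (ConcreteCategory.congr_hom (φ.naturality WalkingParallelPairHom.right) e).symm
  | refl u => exact Relation.EqvGen.refl _
  | symm u v _ ih => exact Relation.EqvGen.symm _ _ ih
  | trans u v w _ _ ih₁ ih₂ => exact Relation.EqvGen.trans _ _ _ ih₁ ih₂

/-- The graph obtained from `G` by quotienting its vertex set by the connectivity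
relation; its edge set is that of `G`. -/
def ccObj (G : Grph) : Grph :=
  parallelPair (TypeCat.ofHom fun e => Quot.mk G.connRel (G.src e))
    (TypeCat.ofHom fun e => Quot.mk G.connRel (G.tgt e))

/-- The action of the connected components construction on graph homomorphisms. -/
def ccMap {G H : Grph} (φ : G ⟶ H) : ccObj G ⟶ ccObj H :=
  parallelPairHom _ _ _ _ (φ.app .zero)
    (TypeCat.ofHom (Quot.map (φ.app .one) (fun _ _ h => connRel_map φ h)))
    (by
      refine ConcreteCategory.hom_ext _ _ (fun e => ?_)
      exact congrArg (Quot.mk H.connRel)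
        (ConcreteCategory.congr_hom (φ.naturality WalkingParallelPairHom.left) e))
    (by
      refine ConcreteCategory.hom_ext _ _ (fun e => ?_)
      exact congrArg (Quot.mk H.connRel)
        (ConcreteCategory.congr_hom (φ.naturality WalkingParallelPairHom.right) e))

/-- The connected components functor `cc : Grph ⥤ Grph`. -/
def cc : Grph ⥤ Grph where
  obj := ccObj
  map := ccMap
  map_id G := by
    apply NatTrans.ext
    funext x
    cases x
    · rfl
    · refine ConcreteCategory.hom_ext _ _ (fun q => ?_)
      induction q using Quot.ind
      rfl
  map_comp φ ψ := by
    apply NatTrans.ext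
    funext x
    cases x
    · rfl
    · refine ConcreteCategory.hom_ext _ _ (fun q => ?_)
      induction q using Quot.ind
      rfl

/-- The quotient homomorphism `π_G : G ⟶ cc(G)` (identity on edges). -/
def ccπ (G : Grph) : G ⟶ cc.obj G where
  app x := match x with
    | .zero => TypeCat.ofHom fun e => e
    | .one => TypeCat.ofHom fun v => Quot.mk G.connRel v
  naturality := by
    intro X Y f
    change WalkingParallelPairHom X Y at f
    cases f with
    | id =>
        show G.map (𝟙 _) ≫ _ = _ ≫ (cc.obj G).map (𝟙 _)
        rw [CategoryTheory.Functor.map_id, CategoryTheory.Functor.map_id,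
          Category.id_comp, Category.comp_id]
    | left => rfl
    | right => rfl

/-- The graph with one vertex and two loop edges. -/
def twoLoops : Grph := parallelPair (TypeCat.ofHom fun _ : Bool => PUnit.unit)
    (TypeCat.ofHom fun _ : Bool => PUnit.unit)

/-- The terminal graph: one vertex with a single loop edge. -/
def oneLoop : Grph := parallelPair (TypeCat.ofHom fun _ : PUnit => PUnit.unit)
    (TypeCat.ofHom fun _ : PUnit => PUnit.unit)

end Grph

/-- A lasso on a category `C`: an endofunctor preserving pushouts of spans of
monomorphisms, together with a natural transformation from the identity functor all of
whose components are epimorphisms. -/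
structure Lasso (C : Type u) [Category.{v} C] where
  /-- The underlying endofunctor. -/
  L : C ⥤ C
  /-- The natural transformation from the identity functor. -/
  η : 𝟭 C ⟶ L
  /-- `L` preserves pushouts of spans of monomorphisms. -/
  preserves_monic_pushouts :
    ∀ ⦃A B D P : C⦄ (f : A ⟶ B) (g : A ⟶ D) (h : B ⟶ P) (k : D ⟶ P),
      Mono f → Mono g → IsPushout f g h k →
      IsPushout (L.map f) (L.map g) (L.map h) (L.map k)
  /-- Every component of `η` is an epimorphism. -/
  epi_components : ∀ X : C, Epi (η.app X)

open Grph

theorem stmt2 (F : Grph ⥤ Grph) (α : 𝟭 Grph ⟶ F) (hepi : ∀ G : Grph, Epi (α.app G))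
    (G : Grph) (e e' : G.obj .zero) (hne : e ≠ e')
    (hid : (α.app G).app .zero e = (α.app G).app .zero e') :
    Nonempty (F.obj twoLoops ≅ oneLoop) := by
  classical
  -- A graph morphism `G ⟶ twoLoops` separating `e` from `e'`.
  let f : G ⟶ twoLoops :=
    { app := fun x => match x with
        | .zero => TypeCat.ofHom fun a => if a = e then true else false
        | .one => TypeCat.ofHom fun _ => PUnit.unit
      naturality := by
        intro X Y g
        change WalkingParallelPairHom X Y at g
        cases g with
        | id => simp
        | left => rfl
        | right => rfl }
  have hnat := α.naturality f
  have h1 : (α.app twoLoops).app .zero (f.app .zero e)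
      = (F.map f).app .zero ((α.app G).app .zero e) := by
    have := ConcreteCategory.congr_hom (congr_app hnat .zero) e
    simpa using this
  have h2 : (α.app twoLoops).app .zero (f.app .zero e')
      = (F.map f).app .zero ((α.app G).app .zero e') := by
    have := ConcreteCategory.congr_hom (congr_app hnat .zero) e'
    simpa using this
  have hfe : f.app .zero e = true := by simp [f]; rfl
  have hfe' : f.app .zero e' = false := by simp [f, hne.symm]; rfl
  have hkey : (α.app twoLoops).app .zero true = (α.app twoLoops).app .zero false := by
    rw [← hfe, ← hfe', h1, h2, hid]
  -- surjectivity of the components of `α.app twoLoops`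
  haveI := hepi twoLoops
  haveI h0 : Epi ((α.app twoLoops).app WalkingParallelPair.zero) :=
    (NatTrans.epi_iff_epi_app _).mp (hepi twoLoops) _
  haveI hone : Epi ((α.app twoLoops).app WalkingParallelPair.one) :=
    (NatTrans.epi_iff_epi_app _).mp (hepi twoLoops) _
  have hsurj0 : Function.Surjective ((α.app twoLoops).app WalkingParallelPair.zero) :=
    (epi_iff_surjective _).mp h0
  have hsurj1 : Function.Surjective ((α.app twoLoops).app WalkingParallelPair.one) :=
    (epi_iff_surjective _).mp hone
  haveI hU0 : Unique ((F.obj twoLoops).obj WalkingParallelPair.zero) := by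
    refine ⟨⟨(α.app twoLoops).app .zero true⟩, fun b => ?_⟩
    obtain ⟨x, rfl⟩ := hsurj0 b
    cases x
    · exact hkey.symm
    · rfl
  haveI hU1 : Unique ((F.obj twoLoops).obj WalkingParallelPair.one) := by
    refine ⟨⟨(α.app twoLoops).app .one PUnit.unit⟩, fun b => ?_⟩
    obtain ⟨x, rfl⟩ := hsurj1 b
    rfl
  refine ⟨NatIso.ofComponents (fun x => ?_) ?_⟩
  · cases x
    · exact (Equiv.equivPUnit _).toIso
    · exact (Equiv.equivPUnit _).toIso
  · intro X Y g
    refine ConcreteCategory.hom_ext _ _ (fun a => ?_)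
    cases Y <;> exact @Subsingleton.elim PUnit _ _ _
end

section
/- The delooping functor deloop : RGrph ⥤ RGrph preserves pushouts of spans of monomorphisms; consequently, together with the componentwise quotient natural transformation δ : 𝟭_RGrph ⟶ deloop, it forms a lasso on RGrph. -/
open CategoryTheory CategoryTheory.Limits

/-- The objects of the schema category for reflexive graphs: edges `E` and vertices `V`. -/
inductive SRGrObj : Type
  | E | V
  deriving DecidableEq

/-- The morphisms of the schema category for reflexive graphs: besides the identities,
the source and target maps `s t : E ⟶ V`, the distinguished-loop map `l : V ⟶ E`, and
the two composites `ls = s ≫ l` and `lt = t ≫ l` (subject to `l ≫ s = 𝟙 V` and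
`l ≫ t = 𝟙 V`). -/
inductive SRGrHom : SRGrObj → SRGrObj → Type
  | ide (X : SRGrObj) : SRGrHom X X
  | s : SRGrHom .E .V
  | t : SRGrHom .E .V
  | l : SRGrHom .V .E
  | ls : SRGrHom .E .E
  | lt : SRGrHom .E .E

namespace SRGrHom

/-- Composition in the schema category for reflexive graphs. -/
def comp : {X Y Z : SRGrObj} → SRGrHom X Y → SRGrHom Y Z → SRGrHom X Z
  | _, _, _, .ide _, g => g
  | _, _, _, .s, .ide _ => .s
  | _, _, _, .s, .l => .ls
  | _, _, _, .t, .ide _ => .t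
  | _, _, _, .t, .l => .lt
  | _, _, _, .l, .ide _ => .l
  | _, _, _, .l, .s => .ide _
  | _, _, _, .l, .t => .ide _
  | _, _, _, .l, .ls => .l
  | _, _, _, .l, .lt => .l
  | _, _, _, .ls, .ide _ => .ls
  | _, _, _, .ls, .s => .s
  | _, _, _, .ls, .t => .s
  | _, _, _, .ls, .ls => .ls
  | _, _, _, .ls, .lt => .ls
  | _, _, _, .lt, .ide _ => .lt
  | _, _, _, .lt, .s => .t
  | _, _, _, .lt, .t => .t
  | _, _, _, .lt, .ls => .lt
  | _, _, _, .lt, .lt => .lt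

end SRGrHom

/-- The schema category for reflexive graphs. -/
instance : Category SRGrObj where
  Hom := SRGrHom
  id := SRGrHom.ide
  comp := SRGrHom.comp
  id_comp f := rfl
  comp_id f := by cases f <;> rfl
  assoc f g h := by cases f <;> cases g <;> cases h <;> rfl

@[simp] lemma SRGrHom.comp_def {X Y Z : SRGrObj} (f : X ⟶ Y) (g : Y ⟶ Z) :
    f ≫ g = SRGrHom.comp f g := rfl

@[simp] lemma SRGrHom.id_def (X : SRGrObj) : 𝟙 X = SRGrHom.ide X := rfl

/-- The category of reflexive graphs, realized as the functor category from the schema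
category `SRGrObj` to `Type`. -/
abbrev RGrph : Type 1 := SRGrObj ⥤ Type

/-- Build a reflexive graph from the data of a vertex set, an edge set, source and target
maps and a distinguished-loop map satisfying the reflexivity equations. -/
def mkRGrph (Vt Et : Type) (s t : Et → Vt) (l : Vt → Et)
    (hs : ∀ v, s (l v) = v) (ht : ∀ v, t (l v) = v) : RGrph where
  obj X := match X with
    | .E => Et
    | .V => Vt
  map {X Y} f := match X, Y, f with
    | _, _, .ide _ => TypeCat.ofHom id
    | _, _, .s => TypeCat.ofHom s
    | _, _, .t => TypeCat.ofHom t
    | _, _, .l => TypeCat.ofHom l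
    | _, _, .ls => TypeCat.ofHom fun e => l (s e)
    | _, _, .lt => TypeCat.ofHom fun e => l (t e)
  map_id X := rfl
  map_comp {X Y Z} f g := by
    change SRGrHom X Y at f
    change SRGrHom Y Z at g
    cases f <;> cases g <;> ext x <;>
      simp [SRGrHom.comp_def, SRGrHom.comp, hs, ht, types_comp_apply]

namespace RGrph

@[simp] lemma map_l_s (G : RGrph) (v : G.obj .V) :
    G.map SRGrHom.s (G.map SRGrHom.l v) = v := by
  have h : G.map (SRGrHom.l ≫ SRGrHom.s) = G.map SRGrHom.l ≫ G.map SRGrHom.s :=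
    G.map_comp _ _
  have h' : G.map (SRGrHom.l ≫ SRGrHom.s) = 𝟙 _ := G.map_id SRGrObj.V
  have := types_congr_hom (h.symm.trans h') v
  simpa [types_comp_apply] using this

@[simp] lemma map_l_t (G : RGrph) (v : G.obj .V) :
    G.map SRGrHom.t (G.map SRGrHom.l v) = v := by
  have h : G.map (SRGrHom.l ≫ SRGrHom.t) = G.map SRGrHom.l ≫ G.map SRGrHom.t :=
    G.map_comp _ _
  have h' : G.map (SRGrHom.l ≫ SRGrHom.t) = 𝟙 _ := G.map_id SRGrObj.V
  have := types_congr_hom (h.symm.trans h') v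
  simpa [types_comp_apply] using this

@[simp] lemma map_ls (G : RGrph) (e : G.obj .E) :
    G.map SRGrHom.ls e = G.map SRGrHom.l (G.map SRGrHom.s e) := by
  have h : G.map (SRGrHom.s ≫ SRGrHom.l) = G.map SRGrHom.s ≫ G.map SRGrHom.l :=
    G.map_comp _ _
  simpa [types_comp_apply, SRGrHom.comp] using types_congr_hom h e

@[simp] lemma map_lt (G : RGrph) (e : G.obj .E) :
    G.map SRGrHom.lt e = G.map SRGrHom.l (G.map SRGrHom.t e) := by
  have h : G.map (SRGrHom.t ≫ SRGrHom.l) = G.map SRGrHom.t ≫ G.map SRGrHom.l :=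
    G.map_comp _ _
  simpa [types_comp_apply, SRGrHom.comp] using types_congr_hom h e

@[simp] lemma map_ide (G : RGrph) (X : SRGrObj) (x : G.obj X) :
    G.map (SRGrHom.ide X) x = x := by
  have h : G.map (𝟙 X) = 𝟙 _ := G.map_id X
  simpa using types_congr_hom h x

/-- Build a morphism of reflexive graphs from an arbitrary reflexive graph `G` to one
built by `mkRGrph`, from compatible vertex and edge maps. -/
def homToMk (G : RGrph) {Vt Et : Type} {s t : Et → Vt} {l : Vt → Et}
    {hs : ∀ v, s (l v) = v} {ht : ∀ v, t (l v) = v}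
    (fv : G.obj .V → Vt) (fe : G.obj .E → Et)
    (hfs : ∀ e, s (fe e) = fv (G.map SRGrHom.s e))
    (hft : ∀ e, t (fe e) = fv (G.map SRGrHom.t e))
    (hfl : ∀ v, l (fv v) = fe (G.map SRGrHom.l v)) :
    G ⟶ mkRGrph Vt Et s t l hs ht where
  app X := match X with
    | .E => TypeCat.ofHom fe
    | .V => TypeCat.ofHom fv
  naturality := by
    intro X Y f
    change SRGrHom X Y at f
    cases f <;> ext x <;>
      simp [mkRGrph, types_comp_apply, hfs, hft, hfl, CategoryTheory.Functor.map_id]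

end RGrph

namespace RGrph

/-- The relation on edges identifying any two loops with the same endvertex. -/
def loopRel (G : RGrph) : G.obj .E → G.obj .E → Prop := fun e e' =>
  e = e' ∨ (G.map SRGrHom.s e = G.map SRGrHom.t e ∧
    G.map SRGrHom.s e' = G.map SRGrHom.t e' ∧
    G.map SRGrHom.s e = G.map SRGrHom.s e')

lemma loopRel_src {G : RGrph} {e e' : G.obj .E} (h : loopRel G e e') :
    G.map SRGrHom.s e = G.map SRGrHom.s e' := by
  rcases h with rfl | ⟨_, _, h₃⟩
  · rfl
  · exact h₃

lemma loopRel_tgt {G : RGrph} {e e' : G.obj .E} (h : loopRel G e e') :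
    G.map SRGrHom.t e = G.map SRGrHom.t e' := by
  rcases h with rfl | ⟨h₁, h₂, h₃⟩
  · rfl
  · rw [← h₁, ← h₂, h₃]

/-- The delooping of a reflexive graph: the same vertex set, with edge set the quotient
of the edges by the identification of loops sharing an endvertex. -/
def deloopObj (G : RGrph) : RGrph :=
  mkRGrph (G.obj .V) (Quot (loopRel G))
    (Quot.lift (G.map SRGrHom.s) fun _ _ h => loopRel_src h)
    (Quot.lift (G.map SRGrHom.t) fun _ _ h => loopRel_tgt h)
    (fun v => Quot.mk _ (G.map SRGrHom.l v))
    (fun v => by simp)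
    (fun v => by simp)

/-- The quotient morphism `G ⟶ deloopObj G`. -/
def deloopπ (G : RGrph) : G ⟶ deloopObj G :=
  homToMk G id (Quot.mk _) (fun _ => rfl) (fun _ => rfl) (fun _ => rfl)

lemma loopRel_of_map {G H : RGrph} (φ : G ⟶ H) {e e' : G.obj .E} (h : loopRel G e e') :
    loopRel H (φ.app .E e) (φ.app .E e') := by
  have hs : ∀ x, H.map SRGrHom.s (φ.app .E x) = φ.app .V (G.map SRGrHom.s x) :=
    fun x => (types_congr_hom (φ.naturality SRGrHom.s) x).symm
  have ht : ∀ x, H.map SRGrHom.t (φ.app .E x) = φ.app .V (G.map SRGrHom.t x) :=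
    fun x => (types_congr_hom (φ.naturality SRGrHom.t) x).symm
  rcases h with rfl | ⟨h₁, h₂, h₃⟩
  · exact Or.inl rfl
  · exact Or.inr ⟨by rw [hs, ht, h₁], by rw [hs, ht, h₂], by rw [hs, hs, h₃]⟩

/-- The action of delooping on morphisms of reflexive graphs. -/
def deloopMap {G H : RGrph} (φ : G ⟶ H) : deloopObj G ⟶ deloopObj H :=
  homToMk (deloopObj G) ⇑(φ.app .V)
    (Quot.map ⇑(φ.app .E) fun _ _ h => loopRel_of_map φ h)
    (fun e => by
      induction e using Quot.ind
      exact (types_congr_hom (φ.naturality SRGrHom.s) _).symm)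
    (fun e => by
      induction e using Quot.ind
      exact (types_congr_hom (φ.naturality SRGrHom.t) _).symm)
    (fun v => by
      have h := types_congr_hom (φ.naturality SRGrHom.l) v
      simp only [types_comp_apply, Functor.id_map] at h
      exact congrArg (Quot.mk _) h.symm)

/-- The delooping functor on reflexive graphs. -/
def deloop : RGrph ⥤ RGrph where
  obj := deloopObj
  map := deloopMap
  map_id G := by
    apply NatTrans.ext
    funext X
    cases X
    · ext e
      induction e using Quot.ind
      rfl
    · rfl
  map_comp φ ψ := by
    apply NatTrans.ext
    funext X
    cases X
    · ext e
      induction e using Quot.ind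
      rfl
    · rfl

/-- The componentwise quotient natural transformation `δ : 𝟭 RGrph ⟶ deloop`. -/
def deloopUnit : 𝟭 RGrph ⟶ deloop where
  app := deloopπ
  naturality := by
    intro G H φ
    apply NatTrans.ext
    funext X
    cases X <;> rfl

end RGrph

namespace RGrph

/-- The relation identifying parallel edges (same source and same target). -/
def parRel (G : RGrph) : G.obj .E → G.obj .E → Prop := fun e e' =>
  G.map SRGrHom.s e = G.map SRGrHom.s e' ∧ G.map SRGrHom.t e = G.map SRGrHom.t e'

lemma parRel_of_map {G H : RGrph} (φ : G ⟶ H) {e e' : G.obj .E} (h : parRel G e e') :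
    parRel H (φ.app .E e) (φ.app .E e') := by
  have hs : ∀ x, H.map SRGrHom.s (φ.app .E x) = φ.app .V (G.map SRGrHom.s x) :=
    fun x => (types_congr_hom (φ.naturality SRGrHom.s) x).symm
  have ht : ∀ x, H.map SRGrHom.t (φ.app .E x) = φ.app .V (G.map SRGrHom.t x) :=
    fun x => (types_congr_hom (φ.naturality SRGrHom.t) x).symm
  exact ⟨by rw [hs, hs, h.1], by rw [ht, ht, h.2]⟩

/-- The smoothing of a reflexive graph: the same vertex set, with edge set the quotient
of the edges by the identification of parallel edges. -/
def smoothObj (G : RGrph) : RGrph :=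
  mkRGrph (G.obj .V) (Quot (parRel G))
    (Quot.lift (G.map SRGrHom.s) fun _ _ h => h.1)
    (Quot.lift (G.map SRGrHom.t) fun _ _ h => h.2)
    (fun v => Quot.mk _ (G.map SRGrHom.l v))
    (fun v => by simp)
    (fun v => by simp)

/-- The action of smoothing on morphisms of reflexive graphs. -/
def smoothMap {G H : RGrph} (φ : G ⟶ H) : smoothObj G ⟶ smoothObj H :=
  homToMk (smoothObj G) ⇑(φ.app .V)
    (Quot.map ⇑(φ.app .E) fun _ _ h => parRel_of_map φ h)
    (fun e => by
      induction e using Quot.ind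
      exact (types_congr_hom (φ.naturality SRGrHom.s) _).symm)
    (fun e => by
      induction e using Quot.ind
      exact (types_congr_hom (φ.naturality SRGrHom.t) _).symm)
    (fun v => by
      have h := types_congr_hom (φ.naturality SRGrHom.l) v
      simp only [types_comp_apply, Functor.id_map] at h
      exact congrArg (Quot.mk _) h.symm)

/-- The smoothing functor on reflexive graphs. -/
def smooth : RGrph ⥤ RGrph where
  obj := smoothObj
  map := smoothMap
  map_id G := by
    apply NatTrans.ext
    funext X
    cases X
    · ext e
      induction e using Quot.ind
      rfl
    · rfl
  map_comp φ ψ := by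
    apply NatTrans.ext
    funext X
    cases X
    · ext e
      induction e using Quot.ind
      rfl
    · rfl

/-- The terminal reflexive graph: one vertex with its distinguished loop. -/
def terminalRGrph : RGrph :=
  mkRGrph PUnit PUnit (fun _ => PUnit.unit) (fun _ => PUnit.unit) (fun _ => PUnit.unit)
    (fun v => by cases v; rfl) (fun v => by cases v; rfl)

/-- The reflexive graph with two vertices, their two distinguished loops, and exactly one
further edge between the two vertices. -/
def edgeRGrph : RGrph :=
  mkRGrph Bool (Option Bool)
    (fun e => e.getD false) (fun e => e.getD true) (fun v => some v)
    (fun v => rfl) (fun v => rfl)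

/-- The morphism from the terminal reflexive graph picking out the vertex `false`. -/
def edgePtFalse : terminalRGrph ⟶ edgeRGrph :=
  homToMk terminalRGrph (fun _ => false) (fun _ => some false)
    (fun _ => rfl) (fun _ => rfl) (fun _ => rfl)

/-- The morphism from the terminal reflexive graph picking out the vertex `true`. -/
def edgePtTrue : terminalRGrph ⟶ edgeRGrph :=
  homToMk terminalRGrph (fun _ => true) (fun _ => some true)
    (fun _ => rfl) (fun _ => rfl) (fun _ => rfl)

end RGrph

open RGrph



namespace RGrphProof

open RGrph

lemma naturality_apply {G H : RGrph} (φ : G ⟶ H) {X Y : SRGrObj} (σ : X ⟶ Y) (x : G.obj X) :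
    H.map σ (φ.app X x) = φ.app Y (G.map σ x) :=
  (types_congr_hom (φ.naturality σ) x).symm

lemma pushout_jointly_surj {A B D P : Type} {f : A ⟶ B} {g : A ⟶ D} {h : B ⟶ P} {k : D ⟶ P}
    (sq : IsPushout f g h k) (p : P) : (∃ b, h b = p) ∨ ∃ d, k d = p := by
  have hu : (TypeCat.ofHom (fun _ : P => True) : P ⟶ Prop) =
      TypeCat.ofHom (fun p : P => (∃ b, h b = p) ∨ ∃ d, k d = p) := by
    apply sq.hom_ext
    · ext b
      exact iff_of_true trivial (Or.inl ⟨b, rfl⟩ : (∃ b', h b' = h b) ∨ ∃ d, k d = h b)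
    · ext d
      exact iff_of_true trivial (Or.inr ⟨d, rfl⟩ : (∃ b, h b = k d) ∨ ∃ d', k d' = k d)
  exact (show True = _ from types_congr_hom hu p).mp trivial

lemma pullback_exists {A B D P : Type} {f : A ⟶ B} {g : A ⟶ D} {h : B ⟶ P} {k : D ⟶ P}
    (pb : IsPullback f g h k) {x : B} {y : D} (hxy : h x = k y) :
    ∃ a, f a = x ∧ g a = y := by
  have w : (TypeCat.ofHom (fun _ : PUnit => x) : PUnit ⟶ B) ≫ h =
      (TypeCat.ofHom (fun _ : PUnit => y) : PUnit ⟶ D) ≫ k := by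
    ext
    exact hxy
  let l := pb.lift _ _ w
  exact ⟨l PUnit.unit,
    types_congr_hom (pb.lift_fst _ _ w) PUnit.unit,
    types_congr_hom (pb.lift_snd _ _ w) PUnit.unit⟩

lemma isPushout_of_app {A B D P : RGrph} {f : A ⟶ B} {g : A ⟶ D} {h : B ⟶ P} {k : D ⟶ P}
    (w : f ≫ h = g ≫ k)
    (H : ∀ X, IsPushout (f.app X) (g.app X) (h.app X) (k.app X)) : IsPushout f g h k := by
  refine IsPushout.of_isColimit' ⟨w⟩ (evaluationJointlyReflectsColimits _ fun X => ?_)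
  refine
    (IsColimit.equivOfNatIsoOfIso (spanCompIso ((evaluation SRGrObj Type).obj X) f g) _ _
      (WalkingSpan.ext ?_ ?_ ?_)).symm (H X).isColimit
  exacts [Iso.refl _, (Category.comp_id _).trans (Category.id_comp _),
    (Category.comp_id _).trans (Category.id_comp _)]

end RGrphProof

open RGrphProof
namespace RGrphProof

open RGrph

lemma deloop_isPushout_E {A B D P : RGrph} {f : A ⟶ B} {g : A ⟶ D} {h : B ⟶ P} {k : D ⟶ P}
    (sq : IsPushout f g h k) (pb : IsPullback f g h k)
    (injh : Function.Injective (h.app SRGrObj.V))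
    (injk : Function.Injective (k.app SRGrObj.V)) :
    IsPushout ((deloop.map f).app SRGrObj.E) ((deloop.map g).app SRGrObj.E)
      ((deloop.map h).app SRGrObj.E) ((deloop.map k).app SRGrObj.E) := by
  have sqE : IsPushout (f.app SRGrObj.E) (g.app SRGrObj.E) (h.app SRGrObj.E) (k.app SRGrObj.E) :=
    sq.map ((evaluation SRGrObj Type).obj SRGrObj.E)
  have pbV : IsPullback (f.app SRGrObj.V) (g.app SRGrObj.V) (h.app SRGrObj.V) (k.app SRGrObj.V) :=
    pb.map ((evaluation SRGrObj Type).obj SRGrObj.V)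
  have weq : (deloop.map f).app SRGrObj.E ≫ (deloop.map h).app SRGrObj.E
      = (deloop.map g).app SRGrObj.E ≫ (deloop.map k).app SRGrObj.E := by
    rw [← NatTrans.comp_app, ← NatTrans.comp_app, ← deloop.map_comp, ← deloop.map_comp, sq.w]
  have hsurj := fun p => pushout_jointly_surj sqE p
  have hloopB : ∀ b : B.obj SRGrObj.E,
      P.map SRGrHom.s (h.app SRGrObj.E b) = P.map SRGrHom.t (h.app SRGrObj.E b) →
      B.map SRGrHom.s b = B.map SRGrHom.t b := by
    intro b hb
    apply injh
    rw [← naturality_apply h SRGrHom.s b, ← naturality_apply h SRGrHom.t b]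
    exact hb
  have hloopD : ∀ d : D.obj SRGrObj.E,
      P.map SRGrHom.s (k.app SRGrObj.E d) = P.map SRGrHom.t (k.app SRGrObj.E d) →
      D.map SRGrHom.s d = D.map SRGrHom.t d := by
    intro d hd
    apply injk
    rw [← naturality_apply k SRGrHom.s d, ← naturality_apply k SRGrHom.t d]
    exact hd
  have wc : ∀ s : PushoutCocone ((deloop.map f).app SRGrObj.E) ((deloop.map g).app SRGrObj.E),
      f.app SRGrObj.E ≫ TypeCat.ofHom (fun b => s.inl (Quot.mk (loopRel B) b))
        = g.app SRGrObj.E ≫ TypeCat.ofHom (fun d => s.inr (Quot.mk (loopRel D) d)) := by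
    intro s
    ext a
    exact types_congr_hom s.condition (Quot.mk (loopRel A) a)
  let m₀ : ∀ s : PushoutCocone ((deloop.map f).app SRGrObj.E) ((deloop.map g).app SRGrObj.E),
      P.obj SRGrObj.E → s.pt := fun s =>
    sqE.desc (TypeCat.ofHom fun b => s.inl (Quot.mk (loopRel B) b))
      (TypeCat.ofHom fun d => s.inr (Quot.mk (loopRel D) d))
      (wc s)
  have m₀h : ∀ s b, m₀ s (h.app SRGrObj.E b) = s.inl (Quot.mk (loopRel B) b) := fun s b =>
    types_congr_hom (sqE.inl_desc _ _ (wc s)) b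
  have m₀k : ∀ s d, m₀ s (k.app SRGrObj.E d) = s.inr (Quot.mk (loopRel D) d) := fun s d =>
    types_congr_hom (sqE.inr_desc _ _ (wc s)) d
  have cross : ∀ (s : PushoutCocone ((deloop.map f).app SRGrObj.E)
        ((deloop.map g).app SRGrObj.E)) (b : B.obj SRGrObj.E) (d : D.obj SRGrObj.E),
      B.map SRGrHom.s b = B.map SRGrHom.t b → D.map SRGrHom.s d = D.map SRGrHom.t d →
      h.app SRGrObj.V (B.map SRGrHom.s b) = k.app SRGrObj.V (D.map SRGrHom.s d) →
      s.inl (Quot.mk (loopRel B) b) = s.inr (Quot.mk (loopRel D) d) := by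
    intro s b d hb hd hbd
    obtain ⟨a, ha1, ha2⟩ := pullback_exists pbV hbd
    have e1 : (deloop.map f).app SRGrObj.E (Quot.mk (loopRel A) (A.map SRGrHom.l a))
        = Quot.mk (loopRel B) b := by
      apply Quot.sound
      refine Or.inr ⟨?_, hb, ?_⟩
      · rw [← naturality_apply f SRGrHom.l a, map_l_s, map_l_t]
      · rw [← naturality_apply f SRGrHom.l a, map_l_s, ha1]
    have e2 : (deloop.map g).app SRGrObj.E (Quot.mk (loopRel A) (A.map SRGrHom.l a))
        = Quot.mk (loopRel D) d := by
      apply Quot.sound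
      refine Or.inr ⟨?_, hd, ?_⟩
      · rw [← naturality_apply g SRGrHom.l a, map_l_s, map_l_t]
      · rw [← naturality_apply g SRGrHom.l a, map_l_s, ha2]
    calc s.inl (Quot.mk (loopRel B) b)
        = s.inl ((deloop.map f).app SRGrObj.E (Quot.mk (loopRel A) (A.map SRGrHom.l a))) :=
          (congrArg s.inl e1).symm
      _ = s.inr ((deloop.map g).app SRGrObj.E (Quot.mk (loopRel A) (A.map SRGrHom.l a))) :=
          types_congr_hom s.condition (Quot.mk (loopRel A) (A.map SRGrHom.l a))
      _ = s.inr (Quot.mk (loopRel D) d) := congrArg s.inr e2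
  have resp : ∀ (s : PushoutCocone ((deloop.map f).app SRGrObj.E)
        ((deloop.map g).app SRGrObj.E)) (e e' : P.obj SRGrObj.E),
      loopRel P e e' → m₀ s e = m₀ s e' := by
    intro s e e' he
    rcases he with rfl | ⟨h1, h2, h3⟩
    · rfl
    rcases hsurj e with ⟨b, rfl⟩ | ⟨d, rfl⟩ <;> rcases hsurj e' with ⟨b', rfl⟩ | ⟨d', rfl⟩
    · rw [m₀h s b, m₀h s b']
      refine congrArg s.inl (Quot.sound (Or.inr ⟨hloopB b h1, hloopB b' h2, injh ?_⟩))
      rw [← naturality_apply h SRGrHom.s b, ← naturality_apply h SRGrHom.s b']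
      exact h3
    · rw [m₀h s b, m₀k s d']
      refine cross s b d' (hloopB b h1) (hloopD d' h2) ?_
      rw [← naturality_apply h SRGrHom.s b, ← naturality_apply k SRGrHom.s d']
      exact h3
    · rw [m₀k s d, m₀h s b']
      refine (cross s b' d (hloopB b' h2) (hloopD d h1) ?_).symm
      rw [← naturality_apply h SRGrHom.s b', ← naturality_apply k SRGrHom.s d]
      exact h3.symm
    · rw [m₀k s d, m₀k s d']
      refine congrArg s.inr (Quot.sound (Or.inr ⟨hloopD d h1, hloopD d' h2, injk ?_⟩))
      rw [← naturality_apply k SRGrHom.s d, ← naturality_apply k SRGrHom.s d']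
      exact h3
  refine IsPushout.of_isColimit (PushoutCocone.IsColimit.mk weq
    (fun s => TypeCat.ofHom (Quot.lift (m₀ s) (resp s))) (fun s => ?_) (fun s => ?_) (fun s m hm1 hm2 => ?_))
  · ext q
    induction q using Quot.ind with
    | _ b => exact m₀h s b
  · ext q
    induction q using Quot.ind with
    | _ d => exact m₀k s d
  · ext q
    induction q using Quot.ind with
    | _ e =>
      rcases hsurj e with ⟨b, rfl⟩ | ⟨d, rfl⟩
      · exact (types_congr_hom hm1 (Quot.mk (loopRel B) b)).trans (m₀h s b).symm
      · exact (types_congr_hom hm2 (Quot.mk (loopRel D) d)).trans (m₀k s d).symm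

end RGrphProof
theorem stmt16 :
    (∀ ⦃A B D P : RGrph⦄ (f : A ⟶ B) (g : A ⟶ D) (h : B ⟶ P) (k : D ⟶ P),
      Mono f → Mono g → IsPushout f g h k →
      IsPushout (deloop.map f) (deloop.map g) (deloop.map h) (deloop.map k))
    ∧ (∀ G : RGrph, Epi (deloopUnit.app G)) := by
  constructor
  · intro A B D P f g h k hf hg sq
    haveI := hf
    haveI := hg
    haveI : Mono h := Adhesive.mono_of_isPushout_of_mono_right sq
    haveI : Mono k := Adhesive.mono_of_isPushout_of_mono_left sq
    have pb : IsPullback f g h k := Adhesive.isPullback_of_isPushout_of_mono_left sq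
    have injh : Function.Injective (h.app SRGrObj.V) :=
      (mono_iff_injective _).mp inferInstance
    have injk : Function.Injective (k.app SRGrObj.V) :=
      (mono_iff_injective _).mp inferInstance
    refine RGrphProof.isPushout_of_app ?_ ?_
    · rw [← deloop.map_comp, ← deloop.map_comp, sq.w]
    · intro X
      cases X
      · exact RGrphProof.deloop_isPushout_E sq pb injh injk
      · exact sq.map ((evaluation SRGrObj Type).obj SRGrObj.V)
  · intro G
    have : ∀ X, Epi ((deloopUnit.app G).app X) := by
      intro X
      rw [epi_iff_surjective]
      cases X
      · intro q
        induction q using Quot.ind with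
        | _ e => exact ⟨e, rfl⟩
      · exact fun v => ⟨v, rfl⟩
    exact NatTrans.epi_of_epi_app _
end
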